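/- arXiv:2401.08260 — 2 statements merged into one kernel-verified Lean document; each statement's English description precedes it below -/
import Mathlib

section
/- Let d ≥ 2 and define C = (4 d Γ((d+2)/2) / (√π Γ((d-1)/2))) ∫₀¹ t² log(t) (1-t²)^{(d-3)/2} dt, and let f : ℝ_{≥0} → ℝ be f(x) = d x² log(x) - C x² for x > 0 and f(0) = 0. Then for all x, y ∈ ℝ^d with x ≠ y, ∫_{S^{d-1}} f(|⟨ξ, x - y⟩|) dU(ξ) = ‖x - y‖² log(‖x - y‖), where U is the uniform (normalized rotation-invariant) probability measure on the unit sphere S^{d-1} ⊆ ℝ^d. That is, the thin plate spline kernel K(x,y) = ‖x-y‖² log(‖x-y‖) is the sliced version of the one-dimensional kernel k(s,t) = f(|s-t|). -/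
/-!
Put `v = x - y`, `r = ‖v‖` and `t = ⟪ξ, v / r⟫`. Since `log 0 = 0`, for every `ξ`
`f |⟪ξ, v⟫| = r² (d (log r) t² + d t² log |t| - C t²)`, so the theorem reduces to the two moments
`∫ t² dU = 1 / d` and `∫ t² log |t| dU = C / d²`.

The sphere integral of `g ⟪ξ, u⟫` does not depend on the unit vector `u`: multiplied by a Gaussian
radial integral it becomes `∫ g ⟪x / ‖x‖, u⟫ exp (-‖x‖²) dx`, which is invariant under the reflection
taking `u` to another unit vector. With `∑ᵢ ⟪ξ, eᵢ⟫² = 1` this gives the first moment. For the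
second, evaluate the same Gaussian integral with `u = e₀` by slicing `x = (a, w) ∈ ℝ × ℝ^{d-1}`:
polar coordinates in `w` and then in the half-plane `(a, ‖w‖)` give the factor
`|S^{d-2}| ∫₀^π sin^{d-2} θ g (cos θ) dθ`, and `s = cos θ` turns this into the integral defining `C`.
-/

open MeasureTheory Metric
open scoped RealInnerProductSpace

/-- The uniform (normalized rotation-invariant) probability measure on the unit sphere
`S^{d-1} ⊆ ℝ^d`, obtained by normalizing the surface measure. -/
noncomputable def uniformSphere (d : ℕ) :
    Measure (sphere (0 : EuclideanSpace ℝ (Fin d)) 1) :=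
  ((volume : Measure (EuclideanSpace ℝ (Fin d))).toSphere Set.univ)⁻¹ •
    (volume : Measure (EuclideanSpace ℝ (Fin d))).toSphere

open Set Module Real

theorem integral_volumeIoiPow (n : ℕ) (h : ℝ → ℝ) :
    ∫ r : Ioi (0 : ℝ), h r ∂(Measure.volumeIoiPow n) = ∫ r in Ioi 0, r ^ n * h r := by
  simp only [Measure.volumeIoiPow, ENNReal.ofReal]
  rw [integral_withDensity_eq_integral_smul (measurable_subtype_coe.pow_const _).real_toNNReal,
    integral_subtype_comap measurableSet_Ioi fun r ↦ (r ^ n).toNNReal • h r]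
  refine setIntegral_congr_fun measurableSet_Ioi fun r hr ↦ ?_
  rw [NNReal.smul_def, Real.coe_toNNReal _ (pow_nonneg (le_of_lt hr) _), smul_eq_mul]

theorem integral_comp_normalize_mul_fun_norm {E : Type*} [NormedAddCommGroup E]
    [NormedSpace ℝ E] [FiniteDimensional ℝ E] [MeasurableSpace E] [BorelSpace E] [Nontrivial E]
    (μ : Measure E) [μ.IsAddHaarMeasure] (F : E → ℝ) (h : ℝ → ℝ) :
    ∫ x, F (‖x‖⁻¹ • x) * h ‖x‖ ∂μ =
      (∫ ξ : sphere (0 : E) 1, F ξ ∂μ.toSphere) * ∫ r in Ioi 0, r ^ (finrank ℝ E - 1) * h r := by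
  calc ∫ x, F (‖x‖⁻¹ • x) * h ‖x‖ ∂μ
      = ∫ x : ({(0 : E)}ᶜ : Set E), F (‖x.1‖⁻¹ • x.1) * h ‖x.1‖ ∂(μ.comap (↑)) := by
        rw [integral_subtype_comap (measurableSet_singleton _).compl
          fun x ↦ F (‖x‖⁻¹ • x) * h ‖x‖, restrict_compl_singleton]
    _ = ∫ p : sphere (0 : E) 1 × Ioi (0 : ℝ), F p.1 * h p.2
          ∂(μ.toSphere.prod (.volumeIoiPow (finrank ℝ E - 1))) := by
        simpa using μ.measurePreserving_homeomorphUnitSphereProd.integral_comp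
          (Homeomorph.measurableEmbedding _) (fun p ↦ F p.1 * h p.2)
    _ = _ := by
        rw [integral_prod_mul (f := fun ξ : sphere (0 : E) 1 ↦ F ξ) (g := fun r : Ioi (0 : ℝ) ↦ h r),
          integral_volumeIoiPow]

theorem integrableOn_pow_mul_exp_neg_sq (k : ℕ) :
    IntegrableOn (fun r : ℝ ↦ r ^ k * exp (-r ^ 2)) (Ioi 0) := by
  simpa only [rpow_natCast, neg_mul, one_mul] using integrableOn_rpow_mul_exp_neg_mul_sq
    (b := 1) one_pos (neg_one_lt_zero.trans_le k.cast_nonneg)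

theorem integral_pow_mul_exp_neg_sq_pos (k : ℕ) :
    0 < ∫ r in Ioi (0 : ℝ), r ^ k * exp (-r ^ 2) := by
  have h := integral_rpow_mul_exp_neg_rpow (p := 2) (q := k) two_pos
    (neg_one_lt_zero.trans_le k.cast_nonneg)
  simp only [rpow_natCast, rpow_two] at h
  rw [h]
  exact mul_pos one_half_pos (Gamma_pos_of_pos (by positivity))

section InnerProductSpace

variable {E : Type*} [NormedAddCommGroup E] [InnerProductSpace ℝ E] [FiniteDimensional ℝ E]
  [MeasurableSpace E] [BorelSpace E]

theorem integrable_toSphere_comp_inner {g : ℝ → ℝ} (hg : Continuous g) (v : E) :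
    Integrable (fun ξ : sphere (0 : E) 1 ↦ g ⟪(ξ : E), v⟫) (volume : Measure E).toSphere :=
  (by fun_prop : Continuous _).integrable_of_hasCompactSupport (.of_compactSpace _)

variable [Nontrivial E]

theorem integral_toSphere_comp_inner_eq_of_norm_eq_one (g : ℝ → ℝ) {u v : E} (hu : ‖u‖ = 1)
    (hv : ‖v‖ = 1) :
    ∫ ξ : sphere (0 : E) 1, g ⟪(ξ : E), u⟫ ∂(volume : Measure E).toSphere =
      ∫ ξ : sphere (0 : E) 1, g ⟪(ξ : E), v⟫ ∂(volume : Measure E).toSphere := by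
  let T := (ℝ ∙ (u - v))ᗮ.reflection
  have hT : T u = v := Submodule.reflection_sub (hu.trans hv.symm)
  have hgauss : ∫ x : E, g ⟪‖x‖⁻¹ • x, v⟫ * exp (-‖x‖ ^ 2) =
      ∫ x : E, g ⟪‖x‖⁻¹ • x, u⟫ * exp (-‖x‖ ^ 2) := by
    rw [← T.measurePreserving.integral_comp T.toHomeomorph.measurableEmbedding, ← hT]
    simp only [LinearIsometryEquiv.norm_map, ← map_smul, LinearIsometryEquiv.inner_map_map]
  have hpolar (w : E) := integral_comp_normalize_mul_fun_norm (volume : Measure E)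
    (fun z ↦ g ⟪z, w⟫) (fun r ↦ exp (-r ^ 2))
  beta_reduce at hpolar
  rw [hpolar, hpolar] at hgauss
  exact (mul_right_cancel₀ (integral_pow_mul_exp_neg_sq_pos _).ne' hgauss).symm

theorem finrank_mul_integral_toSphere_inner_sq {u : E} (hu : ‖u‖ = 1) :
    finrank ℝ E * ∫ ξ : sphere (0 : E) 1, ⟪(ξ : E), u⟫ ^ 2 ∂(volume : Measure E).toSphere =
      (volume : Measure E).toSphere.real univ := by
  let b := stdOrthonormalBasis ℝ E
  calc finrank ℝ E * ∫ ξ : sphere (0 : E) 1, ⟪(ξ : E), u⟫ ^ 2 ∂(volume : Measure E).toSphere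
      = ∑ i, ∫ ξ : sphere (0 : E) 1, ⟪(ξ : E), b i⟫ ^ 2 ∂(volume : Measure E).toSphere := by
        simp only [integral_toSphere_comp_inner_eq_of_norm_eq_one (· ^ 2) (b.orthonormal.1 _) hu,
          Finset.sum_const, Finset.card_univ, Fintype.card_fin, nsmul_eq_mul]
    _ = ∫ ξ : sphere (0 : E) 1, ∑ i, ⟪(ξ : E), b i⟫ ^ 2 ∂(volume : Measure E).toSphere :=
        (integral_finsetSum _ fun i _ ↦ integrable_toSphere_comp_inner (continuous_pow 2) _).symm
    _ = _ := by
        simp only [b.sum_sq_inner_left, norm_eq_of_mem_sphere, one_pow, integral_const,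
          smul_eq_mul, mul_one]

theorem integral_toSphere_inner_sq (v : E) :
    ∫ ξ : sphere (0 : E) 1, ⟪(ξ : E), v⟫ ^ 2 ∂(volume : Measure E).toSphere =
      ‖v‖ ^ 2 * (volume : Measure E).toSphere.real univ / finrank ℝ E := by
  rcases eq_or_ne v 0 with rfl | hv
  · simp
  set u := ‖v‖⁻¹ • v
  have hu : ‖u‖ = 1 := by simp [u, norm_smul, hv]
  have hscale (ξ : E) : ⟪ξ, v⟫ ^ 2 = ‖v‖ ^ 2 * ⟪ξ, u⟫ ^ 2 := by
    rw [← mul_pow, ← inner_smul_right, smul_inv_smul₀ (norm_ne_zero_iff.mpr hv)]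
  simp_rw [hscale, integral_const_mul]
  rw [← finrank_mul_integral_toSphere_inner_sq hu, mul_div_assoc,
    mul_div_cancel_left₀ _ (Nat.cast_ne_zero.mpr finrank_pos.ne')]

end InnerProductSpace

theorem integral_fun_apply_zero_norm (m : ℕ) (G : ℝ → ℝ → ℝ)
    (hG : Integrable fun x : EuclideanSpace ℝ (Fin (m + 2)) ↦ G (x 0) ‖x‖) :
    ∫ x : EuclideanSpace ℝ (Fin (m + 2)), G (x 0) ‖x‖ =
      (volume : Measure (EuclideanSpace ℝ (Fin (m + 1)))).toSphere.real univ *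
        ∫ a, ∫ s in Ioi 0, s ^ m * G a √(a ^ 2 + s ^ 2) := by
  let e : EuclideanSpace ℝ (Fin (m + 2)) ≃ᵐ ℝ × EuclideanSpace ℝ (Fin (m + 1)) :=
    ((MeasurableEquiv.toLp 2 _).symm.trans (MeasurableEquiv.piFinSuccAbove (fun _ ↦ ℝ) 0)).trans
      ((MeasurableEquiv.refl ℝ).prodCongr (MeasurableEquiv.toLp 2 _))
  have he : MeasurePreserving e :=
    ((PiLp.volume_preserving_ofLp _).trans
      (measurePreserving_piFinSuccAbove (fun _ ↦ volume) 0)).trans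
      ((MeasurePreserving.id volume).prod (PiLp.volume_preserving_toLp _))
  let Ψ : ℝ × EuclideanSpace ℝ (Fin (m + 1)) → ℝ := fun z ↦ G z.1 √(z.1 ^ 2 + ‖z.2‖ ^ 2)
  have hΨ (x : EuclideanSpace ℝ (Fin (m + 2))) : Ψ (e x) = G (x 0) ‖x‖ := by
    have hex : e x = (x 0, WithLp.toLp 2 fun j ↦ x ((0 : Fin (m + 2)).succAbove j)) := rfl
    rw [hex, ← sqrt_sq (norm_nonneg x), EuclideanSpace.norm_sq_eq, Fin.sum_univ_succAbove _ 0]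
    simp [Ψ, EuclideanSpace.norm_sq_eq]
  have hΨint : Integrable Ψ (volume.prod volume) := by
    rw [← Measure.volume_eq_prod, ← he.integrable_comp_emb e.measurableEmbedding]
    simpa only [Function.comp_def, hΨ] using hG
  calc ∫ x : EuclideanSpace ℝ (Fin (m + 2)), G (x 0) ‖x‖ = ∫ z, Ψ z := by
        simp_rw [← hΨ]
        exact he.integral_comp' Ψ
    _ = ∫ a, ∫ w, Ψ (a, w) := by
        rw [Measure.volume_eq_prod]
        exact integral_prod Ψ hΨint
    _ = ∫ a, (volume : Measure (EuclideanSpace ℝ (Fin (m + 1)))).toSphere.real univ *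
          ∫ s in Ioi 0, s ^ m * G a √(a ^ 2 + s ^ 2) := by
        congr 1 with a
        rw [integral_fun_norm_addHaar volume (fun s ↦ G a √(a ^ 2 + s ^ 2)),
          Measure.toSphere_real_apply_univ, finrank_euclideanSpace_fin]
        simp [smul_eq_mul, mul_assoc]
    _ = _ := integral_const_mul _ _

theorem setIntegral_upperHalfPlane_eq_polarCoord (F : ℝ × ℝ → ℝ) :
    ∫ p in univ ×ˢ Ioi 0, F p = ∫ p in Ioi 0 ×ˢ Ioo 0 π, p.1 * F (polarCoord.symm p) := by
  have hsub : Ioi 0 ×ˢ Ioo 0 π ⊆ polarCoord.target := by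
    rw [polarCoord_target]
    exact prod_mono_right (Ioo_subset_Ioo_left (neg_nonpos.mpr pi_pos.le))
  have hmem (p) (hp : p ∈ polarCoord.target) :
      polarCoord.symm p ∈ univ ×ˢ Ioi 0 ↔ p ∈ Ioi 0 ×ˢ Ioo 0 π := by
    rw [polarCoord_target] at hp
    obtain ⟨hr, hθ₁, hθ₂⟩ : 0 < p.1 ∧ -π < p.2 ∧ p.2 < π := hp
    simp only [polarCoord_symm_apply, mem_prod, mem_univ, mem_Ioi, mem_Ioo, true_and,
      mul_pos_iff_of_pos_left hr, hr, hθ₂, and_true]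
    exact ⟨fun h ↦ not_le.mp fun h' ↦ (sin_nonpos_of_nonpos_of_neg_pi_le h' hθ₁.le).not_gt h,
      fun h ↦ sin_pos_of_pos_of_lt_pi h hθ₂⟩
  rw [← integral_indicator (MeasurableSet.univ.prod measurableSet_Ioi),
    ← integral_comp_polarCoord_symm,
    setIntegral_congr_fun polarCoord.open_target.measurableSet (g := (Ioi 0 ×ˢ Ioo 0 π).indicator
      fun p ↦ p.1 * F (polarCoord.symm p)) fun p hp ↦ ?_,
    setIntegral_indicator (measurableSet_Ioi.prod measurableSet_Ioo),
    inter_eq_self_of_subset_right hsub]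
  simp only [indicator_apply, hmem p hp, smul_eq_mul, mul_ite, mul_zero]

theorem volume_prod_restrict_Ioi :
    (volume : Measure ℝ).prod (volume.restrict (Ioi 0)) =
      (volume : Measure (ℝ × ℝ)).restrict (univ ×ˢ Ioi 0) := by
  rw [Measure.volume_eq_prod, ← Measure.prod_restrict, Measure.restrict_univ]

theorem inv_mul_mem_Icc_of_abs_le {a ρ : ℝ} (h : |a| ≤ ρ) : ρ⁻¹ * a ∈ Icc (-1 : ℝ) 1 := by
  have hρ : 0 ≤ ρ := (abs_nonneg a).trans h
  rw [mem_Icc, ← abs_le, abs_mul, abs_inv, abs_of_nonneg hρ]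
  exact inv_mul_le_one_of_le₀ h hρ

theorem integrable_comp_inv_norm_mul_apply_zero_mul_exp (m : ℕ) {g : ℝ → ℝ} (hg : Continuous g) :
    Integrable fun x : EuclideanSpace ℝ (Fin (m + 2)) ↦ g (‖x‖⁻¹ * x 0) * exp (-‖x‖ ^ 2) := by
  obtain ⟨M, hM⟩ := (isCompact_Icc (a := (-1 : ℝ)) (b := 1)).exists_bound_of_continuousOn
    hg.continuousOn
  have hgauss : Integrable fun x : EuclideanSpace ℝ (Fin (m + 2)) ↦ exp (-‖x‖ ^ 2) :=
    (integrable_fun_norm_addHaar volume (f := fun r ↦ exp (-r ^ 2))).mpr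
      (integrableOn_pow_mul_exp_neg_sq _)
  refine (hgauss.const_mul M).mono' (by fun_prop) (.of_forall fun x ↦ ?_)
  rw [norm_mul, norm_of_nonneg (exp_pos _).le]
  exact mul_le_mul_of_nonneg_right (hM _ (inv_mul_mem_Icc_of_abs_le (PiLp.norm_apply_le x 0)))
    (exp_pos _).le

theorem integrable_pow_mul_comp_inv_sqrt_mul_exp (m : ℕ) {g : ℝ → ℝ} (hg : Continuous g) :
    Integrable (fun p : ℝ × ℝ ↦
        p.2 ^ m * (g ((√(p.1 ^ 2 + p.2 ^ 2))⁻¹ * p.1) * exp (-√(p.1 ^ 2 + p.2 ^ 2) ^ 2)))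
      ((volume : Measure ℝ).prod (volume.restrict (Ioi 0))) := by
  obtain ⟨M, hM⟩ := (isCompact_Icc (a := (-1 : ℝ)) (b := 1)).exists_bound_of_continuousOn
    hg.continuousOn
  have hbound : Integrable (fun p : ℝ × ℝ ↦ M * (exp (-p.1 ^ 2) * (p.2 ^ m * exp (-p.2 ^ 2))))
      ((volume : Measure ℝ).prod (volume.restrict (Ioi 0))) := by
    refine (Integrable.mul_prod (f := fun a ↦ exp (-a ^ 2)) ?_
      (integrableOn_pow_mul_exp_neg_sq m)).const_mul M
    simpa only [neg_mul, one_mul] using integrable_exp_neg_mul_sq one_pos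
  refine hbound.mono' (by fun_prop) ?_
  rw [volume_prod_restrict_Ioi]
  filter_upwards [ae_restrict_mem (MeasurableSet.univ.prod measurableSet_Ioi)] with ⟨a, s⟩ hp
  have hs : 0 < s := hp.2
  have hsq : √(a ^ 2 + s ^ 2) ^ 2 = a ^ 2 + s ^ 2 := sq_sqrt (by positivity)
  have hg' := hM _ (inv_mul_mem_Icc_of_abs_le
    (abs_le_sqrt (le_add_of_nonneg_right (sq_nonneg s) : a ^ 2 ≤ _)))
  dsimp only
  rw [hsq, neg_add, exp_add, norm_mul, norm_mul, norm_of_nonneg (pow_pos hs m).le,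
    norm_of_nonneg (by positivity : 0 ≤ exp (-a ^ 2) * exp (-s ^ 2))]
  calc s ^ m * (‖g ((√(a ^ 2 + s ^ 2))⁻¹ * a)‖ * (exp (-a ^ 2) * exp (-s ^ 2)))
      ≤ s ^ m * (M * (exp (-a ^ 2) * exp (-s ^ 2))) := by gcongr
    _ = M * (exp (-a ^ 2) * (s ^ m * exp (-s ^ 2))) := by ring

theorem integral_comp_inv_norm_mul_apply_zero_mul_exp (m : ℕ) {g : ℝ → ℝ} (hg : Continuous g) :
    ∫ x : EuclideanSpace ℝ (Fin (m + 2)), g (‖x‖⁻¹ * x 0) * exp (-‖x‖ ^ 2) =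
      (volume : Measure (EuclideanSpace ℝ (Fin (m + 1)))).toSphere.real univ *
        (∫ θ in Ioo 0 π, sin θ ^ m * g (cos θ)) * ∫ r in Ioi 0, r ^ (m + 1) * exp (-r ^ 2) := by
  set S := (volume : Measure (EuclideanSpace ℝ (Fin (m + 1)))).toSphere.real univ
  have hsqrt {r : ℝ} (hr : 0 < r) (θ : ℝ) : √((r * cos θ) ^ 2 + (r * sin θ) ^ 2) = r := by
    rw [mul_pow, mul_pow, ← mul_add, cos_sq_add_sin_sq, mul_one, sqrt_sq hr.le]
  calc _ = S * ∫ a, ∫ s in Ioi 0,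
          s ^ m * (g ((√(a ^ 2 + s ^ 2))⁻¹ * a) * exp (-√(a ^ 2 + s ^ 2) ^ 2)) :=
        integral_fun_apply_zero_norm m (fun a ρ ↦ g (ρ⁻¹ * a) * exp (-ρ ^ 2))
          (integrable_comp_inv_norm_mul_apply_zero_mul_exp m hg)
    _ = S * ∫ p in univ ×ˢ Ioi 0,
          p.2 ^ m * (g ((√(p.1 ^ 2 + p.2 ^ 2))⁻¹ * p.1) * exp (-√(p.1 ^ 2 + p.2 ^ 2) ^ 2)) := by
        rw [integral_integral (integrable_pow_mul_comp_inv_sqrt_mul_exp m hg),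
          volume_prod_restrict_Ioi]
    _ = S * ∫ p in Ioi 0 ×ˢ Ioo 0 π,
          p.1 ^ (m + 1) * exp (-p.1 ^ 2) * (sin p.2 ^ m * g (cos p.2)) := by
        rw [setIntegral_upperHalfPlane_eq_polarCoord]
        congr 1
        refine setIntegral_congr_fun (measurableSet_Ioi.prod measurableSet_Ioo) fun p hp ↦ ?_
        simp only [polarCoord_symm_apply, hsqrt hp.1]
        rw [inv_mul_cancel_left₀ (ne_of_gt hp.1)]
        ring
    _ = _ := by
        rw [Measure.volume_eq_prod, ← Measure.prod_restrict,
          integral_prod_mul (f := fun r ↦ r ^ (m + 1) * exp (-r ^ 2))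
            (g := fun θ ↦ sin θ ^ m * g (cos θ))]
        ring

theorem integral_toSphere_comp_inner (m : ℕ) {g : ℝ → ℝ} (hg : Continuous g)
    {u : EuclideanSpace ℝ (Fin (m + 2))} (hu : ‖u‖ = 1) :
    ∫ ξ : sphere (0 : EuclideanSpace ℝ (Fin (m + 2))) 1, g ⟪(ξ : EuclideanSpace ℝ (Fin (m + 2))), u⟫
        ∂(volume : Measure (EuclideanSpace ℝ (Fin (m + 2)))).toSphere =
      (volume : Measure (EuclideanSpace ℝ (Fin (m + 1)))).toSphere.real univ *
        ∫ θ in Ioo 0 π, sin θ ^ m * g (cos θ) := by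
  set e₀ := EuclideanSpace.single (0 : Fin (m + 2)) (1 : ℝ)
  rw [integral_toSphere_comp_inner_eq_of_norm_eq_one g hu (by simp [e₀] : ‖e₀‖ = 1)]
  refine mul_right_cancel₀ (integral_pow_mul_exp_neg_sq_pos (m + 1)).ne' ?_
  have hpolar := integral_comp_normalize_mul_fun_norm
    (volume : Measure (EuclideanSpace ℝ (Fin (m + 2)))) (fun z ↦ g ⟪z, e₀⟫) (fun r ↦ exp (-r ^ 2))
  simp only [finrank_euclideanSpace_fin, e₀, EuclideanSpace.inner_single_right, inner_smul_left,
    conj_trivial, one_mul, show m + 2 - 1 = m + 1 from rfl] at hpolar ⊢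
  rw [← hpolar, integral_comp_inv_norm_mul_apply_zero_mul_exp m hg]

theorem image_cos_Ioo_zero_pi_div_two : cos '' Ioo 0 (π / 2) = Ioo 0 1 := by
  ext t
  constructor
  · rintro ⟨θ, hθ, rfl⟩
    refine ⟨cos_pos_of_mem_Ioo ⟨by linarith [hθ.1, pi_pos], hθ.2⟩, ?_⟩
    simpa using strictAntiOn_cos (left_mem_Icc.mpr pi_pos.le)
      ⟨hθ.1.le, by linarith [hθ.2, pi_pos]⟩ hθ.1
  · rintro ⟨h0, h1⟩
    exact ⟨arccos t, ⟨arccos_pos.mpr h1, arccos_lt_pi_div_two.mpr h0⟩, cos_arccos (by linarith) h1.le⟩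

theorem integral_sin_pow_mul_comp_cos_Ioo_zero_pi_div_two (m : ℕ) (g : ℝ → ℝ) :
    ∫ θ in Ioo 0 (π / 2), sin θ ^ m * g (cos θ) =
      ∫ t in Ioo 0 1, g t * (1 - t ^ 2) ^ (((m : ℝ) - 1) / 2) := by
  have hinj : InjOn cos (Ioo 0 (π / 2)) :=
    injOn_cos.mono fun θ hθ ↦ mem_Icc.mpr ⟨hθ.1.le, by linarith [hθ.2, pi_pos]⟩
  rw [← image_cos_Ioo_zero_pi_div_two, integral_image_eq_integral_abs_deriv_smul measurableSet_Ioo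
    (fun θ _ ↦ (hasDerivAt_cos θ).hasDerivWithinAt) hinj]
  refine setIntegral_congr_fun measurableSet_Ioo fun θ hθ ↦ ?_
  have hsin : 0 < sin θ := sin_pos_of_pos_of_lt_pi hθ.1 (by linarith [hθ.2, pi_pos])
  have hpow : sin θ * (sin θ ^ 2) ^ (((m : ℝ) - 1) / 2) = sin θ ^ m := by
    rw [← rpow_natCast (sin θ) m, ← rpow_two, ← rpow_mul hsin.le, mul_comm,
      ← rpow_add_one hsin.ne']
    congr 1
    ring
  rw [smul_eq_mul, abs_neg, abs_of_pos hsin, ← sin_sq, ← hpow]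
  ring

theorem integral_sin_pow_mul_comp_cos_of_even (m : ℕ) {g : ℝ → ℝ} (hg : Continuous g)
    (heven : ∀ t, g (-t) = g t) :
    ∫ θ in Ioo 0 π, sin θ ^ m * g (cos θ) =
      2 * ∫ t in Ioo 0 1, g t * (1 - t ^ 2) ^ (((m : ℝ) - 1) / 2) := by
  have hw : Continuous fun θ ↦ sin θ ^ m * g (cos θ) := by fun_prop
  have hreflect : ∫ θ in π / 2..π, sin θ ^ m * g (cos θ) =
      ∫ θ in 0..π / 2, sin θ ^ m * g (cos θ) := by
    have := intervalIntegral.integral_comp_sub_left (fun θ ↦ sin θ ^ m * g (cos θ)) π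
      (a := 0) (b := π / 2)
    simp only [sin_pi_sub, cos_pi_sub, heven, sub_zero, sub_half] at this
    exact this.symm
  rw [← integral_sin_pow_mul_comp_cos_Ioo_zero_pi_div_two, ← integral_Ioc_eq_integral_Ioo,
    ← integral_Ioc_eq_integral_Ioo, ← intervalIntegral.integral_of_le pi_pos.le,
    ← intervalIntegral.integral_of_le pi_div_two_pos.le,
    ← intervalIntegral.integral_add_adjacent_intervals (b := π / 2) (hw.intervalIntegrable _ _)
      (hw.intervalIntegrable _ _), hreflect, two_mul]

theorem continuous_sq_mul_log_abs : Continuous fun t : ℝ ↦ t ^ 2 * log |t| := by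
  refine (continuous_abs.mul (continuous_mul_log.comp continuous_abs)).congr fun t ↦ ?_
  simp only [Pi.mul_apply, Function.comp_apply, ← sq_abs t]
  ring

theorem sq_mul_log_abs_mul (r t : ℝ) :
    (r * t) ^ 2 * log |r * t| = r ^ 2 * (t ^ 2 * log |r|) + r ^ 2 * (t ^ 2 * log |t|) := by
  rcases eq_or_ne r 0 with rfl | hr
  · simp
  rcases eq_or_ne t 0 with rfl | ht
  · simp
  rw [abs_mul, log_mul (abs_ne_zero.mpr hr) (abs_ne_zero.mpr ht)]
  ring

theorem integral_toSphere_inner_sq_mul_log_abs (m : ℕ) (v : EuclideanSpace ℝ (Fin (m + 2))) :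
    ∫ ξ : sphere (0 : EuclideanSpace ℝ (Fin (m + 2))) 1,
        ⟪(ξ : EuclideanSpace ℝ (Fin (m + 2))), v⟫ ^ 2 *
          log |⟪(ξ : EuclideanSpace ℝ (Fin (m + 2))), v⟫|
        ∂(volume : Measure (EuclideanSpace ℝ (Fin (m + 2)))).toSphere =
      ‖v‖ ^ 2 * log ‖v‖ * (volume : Measure (EuclideanSpace ℝ (Fin (m + 2)))).toSphere.real univ /
          (m + 2) +
        ‖v‖ ^ 2 * (2 * (volume : Measure (EuclideanSpace ℝ (Fin (m + 1)))).toSphere.real univ *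
          ∫ t in Ioo 0 1, t ^ 2 * log t * (1 - t ^ 2) ^ (((m : ℝ) - 1) / 2)) := by
  rcases eq_or_ne v 0 with rfl | hv
  · simp
  set u := ‖v‖⁻¹ • v
  have hu : ‖u‖ = 1 := by simp [u, norm_smul, hv]
  have hscale (ξ : EuclideanSpace ℝ (Fin (m + 2))) : ⟪ξ, v⟫ = ‖v‖ * ⟪ξ, u⟫ := by
    rw [← inner_smul_right, smul_inv_smul₀ (norm_ne_zero_iff.mpr hv)]
  have hlog : ∫ t in Ioo 0 1, t ^ 2 * log |t| * (1 - t ^ 2) ^ (((m : ℝ) - 1) / 2) =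
      ∫ t in Ioo 0 1, t ^ 2 * log t * (1 - t ^ 2) ^ (((m : ℝ) - 1) / 2) :=
    setIntegral_congr_fun measurableSet_Ioo fun t ht ↦ by rw [abs_of_pos ht.1]
  simp_rw [hscale, sq_mul_log_abs_mul, abs_norm]
  rw [integral_add
      (integrable_toSphere_comp_inner (g := fun t ↦ ‖v‖ ^ 2 * (t ^ 2 * log ‖v‖)) (by fun_prop) u)
      (integrable_toSphere_comp_inner (continuous_sq_mul_log_abs.const_mul (‖v‖ ^ 2)) u),
    integral_const_mul, integral_const_mul, integral_mul_const, integral_toSphere_inner_sq, hu,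
    integral_toSphere_comp_inner m continuous_sq_mul_log_abs hu,
    integral_sin_pow_mul_comp_cos_of_even m continuous_sq_mul_log_abs (by simp), hlog,
    finrank_euclideanSpace_fin]
  push_cast
  ring

theorem toSphere_real_univ_euclideanSpace (n : ℕ) :
    (volume : Measure (EuclideanSpace ℝ (Fin (n + 1)))).toSphere.real univ =
      2 * √π ^ (n + 1) / Gamma ((n + 1) / 2) := by
  rw [Measure.toSphere_real_apply_univ, finrank_euclideanSpace_fin, measureReal_def,
    EuclideanSpace.volume_ball, ENNReal.toReal_mul, ENNReal.toReal_ofReal (by positivity)]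
  simp only [Fintype.card_fin, ENNReal.ofReal_one, one_pow, ENNReal.toReal_one, one_mul,
    Nat.cast_add, Nat.cast_one]
  rw [Gamma_add_one (by positivity)]
  field_simp

theorem gamma_ratio_eq_toSphere_real_ratio (m : ℕ) :
    4 * ((m + 2 : ℕ) : ℝ) * Gamma ((((m + 2 : ℕ) : ℝ) + 2) / 2) /
        (√π * Gamma ((((m + 2 : ℕ) : ℝ) - 1) / 2)) =
      2 * ((m + 2 : ℕ) : ℝ) ^ 2 *
        (volume : Measure (EuclideanSpace ℝ (Fin (m + 1)))).toSphere.real univ /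
        (volume : Measure (EuclideanSpace ℝ (Fin (m + 2)))).toSphere.real univ := by
  rw [toSphere_real_univ_euclideanSpace m, toSphere_real_univ_euclideanSpace (m + 1)]
  have h1 : (((m + 2 : ℕ) : ℝ) + 2) / 2 = ((m + 1 : ℕ) + 1) / 2 + 1 := by push_cast; ring
  have h2 : (((m + 2 : ℕ) : ℝ) - 1) / 2 = ((m : ℕ) + 1) / 2 := by push_cast; ring
  rw [h1, h2, Gamma_add_one (by positivity)]
  field_simp
  push_cast
  ring

theorem integral_uniformSphere (d : ℕ) (F : sphere (0 : EuclideanSpace ℝ (Fin d)) 1 → ℝ) :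
    ∫ ξ, F ξ ∂uniformSphere d =
      (∫ ξ, F ξ ∂(volume : Measure (EuclideanSpace ℝ (Fin d))).toSphere) /
        (volume : Measure (EuclideanSpace ℝ (Fin d))).toSphere.real univ := by
  rw [uniformSphere, integral_smul_measure, ENNReal.toReal_inv, smul_eq_mul, measureReal_def,
    inv_mul_eq_div]

theorem thin_plate_spline_kernel_sliced_general (d : ℕ) (hd : 2 ≤ d) (C : ℝ)
    (hC : C = 4 * (d : ℝ) * Real.Gamma (((d : ℝ) + 2) / 2) /
        (Real.sqrt Real.pi * Real.Gamma (((d : ℝ) - 1) / 2)) *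
      ∫ t in Set.Ioo (0 : ℝ) 1, t ^ 2 * Real.log t * (1 - t ^ 2) ^ (((d : ℝ) - 3) / 2))
    (f : ℝ → ℝ) (hf : ∀ z : ℝ, f z = (d : ℝ) * z ^ 2 * Real.log z - C * z ^ 2)
    (x y : EuclideanSpace ℝ (Fin d)) :
    (∫ ξ : sphere (0 : EuclideanSpace ℝ (Fin d)) 1,
        f |⟪(ξ : EuclideanSpace ℝ (Fin d)), x - y⟫| ∂(uniformSphere d))
      = ‖x - y‖ ^ 2 * Real.log ‖x - y‖ := by
  obtain ⟨m, rfl⟩ : ∃ m, d = m + 2 := ⟨d - 2, by omega⟩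
  have hexp : (((m + 2 : ℕ) : ℝ) - 3) / 2 = ((m : ℝ) - 1) / 2 := by push_cast; ring
  rw [hexp, gamma_ratio_eq_toSphere_real_ratio] at hC
  have hS : (volume : Measure (EuclideanSpace ℝ (Fin (m + 2)))).toSphere.real univ ≠ 0 := by
    rw [toSphere_real_univ_euclideanSpace (m + 1)]
    have := Gamma_pos_of_pos (by positivity : (0 : ℝ) < ((m + 1 : ℕ) + 1) / 2)
    positivity
  have hf' (s : ℝ) : f |s| = (m + 2 : ℕ) * (s ^ 2 * log |s|) - C * s ^ 2 := by
    rw [hf, sq_abs]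
    ring
  simp_rw [hf']
  rw [integral_uniformSphere, integral_sub
      ((integrable_toSphere_comp_inner continuous_sq_mul_log_abs _).const_mul _)
      ((integrable_toSphere_comp_inner (continuous_pow 2) _).const_mul _),
    integral_const_mul, integral_const_mul, integral_toSphere_inner_sq,
    integral_toSphere_inner_sq_mul_log_abs, finrank_euclideanSpace_fin, hC]
  field_simp
  push_cast
  ring

/-- The thin plate spline kernel `K(x,y) = ‖x-y‖² log ‖x-y‖` is the sliced version of the
one-dimensional kernel with basis function `f(z) = d z² log z - C z²` (with `f(0) = 0`,
which holds automatically since `Real.log 0 = 0`), where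
`C = (4d Γ((d+2)/2)/(√π Γ((d-1)/2))) ∫₀¹ t² log t (1-t²)^{(d-3)/2} dt`. -/
theorem thin_plate_spline_kernel_sliced (d : ℕ) (hd : 2 ≤ d) (C : ℝ)
    (hC : C = 4 * (d : ℝ) * Real.Gamma (((d : ℝ) + 2) / 2) /
        (Real.sqrt Real.pi * Real.Gamma (((d : ℝ) - 1) / 2)) *
      ∫ t in Set.Ioo (0 : ℝ) 1, t ^ 2 * Real.log t * (1 - t ^ 2) ^ (((d : ℝ) - 3) / 2))
    (f : ℝ → ℝ) (hf : ∀ z : ℝ, f z = (d : ℝ) * z ^ 2 * Real.log z - C * z ^ 2)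
    (x y : EuclideanSpace ℝ (Fin d)) (hxy : x ≠ y) :
    (∫ ξ : sphere (0 : EuclideanSpace ℝ (Fin d)) 1,
        f |⟪(ξ : EuclideanSpace ℝ (Fin d)), x - y⟫| ∂(uniformSphere d))
      = ‖x - y‖ ^ 2 * Real.log ‖x - y‖ :=
  thin_plate_spline_kernel_sliced_general d hd C hC f hf x y
end

section
/- Let d ≥ 2 and α > 0, and let f : ℝ_{≥0} → ℝ be f(x) = ∑_{n=0}^∞ ((-1)ⁿ αⁿ √π Γ((n+d)/2) / (n! Γ(d/2) Γ((n+1)/2))) xⁿ. Then this power series converges for every x ≥ 0, and for all x, y ∈ ℝ^d, ∫_{S^{d-1}} f(|⟨ξ, x - y⟩|) dU(ξ) = exp(-α ‖x - y‖), where U is the uniform (normalized rotation-invariant) probability measure on the unit sphere S^{d-1} ⊆ ℝ^d. That is, the d-dimensional Laplacian kernel exp(-α‖x-y‖) is the sliced version of the one-dimensional kernel k(s,t) = f(|s-t|). -/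
open MeasureTheory Metric
open scoped RealInnerProductSpace

/-!
Expand `f` in its power series and integrate term by term; this is legitimate because the
integrals of the absolute values of the terms form the exponential series of `|α| ‖x - y‖`.
Everything then rests on the moments
`∫ |⟪ξ, v⟫|ⁿ dU(ξ) = ‖v‖ⁿ Γ((n+1)/2) Γ(d/2) / (√π Γ((n+d)/2))`, which turn the `n`-th
term into `(-α ‖v‖)ⁿ / n!`. They come from evaluating the Gaussian integral
`∫ |⟪x, v⟫|ⁿ exp(-‖x‖²) dx` twice: in polar coordinates it is the sphere integral times
`Γ((n+d)/2) / 2`, and after a rotation taking `v / ‖v‖` to a coordinate vector it splits into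
one-dimensional Gaussian integrals.
-/

open Real Set Filter Topology

lemma integral_Ioi_pow_mul_exp_neg_sq (m : ℕ) :
    ∫ r in Ioi (0 : ℝ), r ^ m * exp (-r ^ 2) = Gamma ((m + 1) / 2) / 2 := by
  have h := integral_rpow_mul_exp_neg_rpow two_pos (by linarith [m.cast_nonneg (α := ℝ)] :
    (-1 : ℝ) < m)
  rw [div_eq_inv_mul, ← one_div, ← h]
  refine setIntegral_congr_fun measurableSet_Ioi fun r _ => ?_
  norm_num [Real.rpow_natCast]

lemma integral_abs_pow_mul_exp_neg_sq (n : ℕ) :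
    ∫ t : ℝ, |t| ^ n * exp (-t ^ 2) = Gamma ((n + 1) / 2) := by
  have h := integral_comp_abs (f := fun s => s ^ n * exp (-s ^ 2))
  simp only [sq_abs] at h
  rw [h, integral_Ioi_pow_mul_exp_neg_sq]
  ring

lemma EuclideanSpace.integral_abs_apply_pow_mul_exp_neg_sq_norm {ι : Type*} [Fintype ι]
    (n : ℕ) (i : ι) :
    ∫ y : EuclideanSpace ℝ ι, |y i| ^ n * exp (-‖y‖ ^ 2)
      = Gamma ((n + 1) / 2) * √π ^ (Fintype.card ι - 1) := by
  classical
  let F : ι → ℝ → ℝ := fun j t => (if j = i then |t| ^ n else 1) * exp (-t ^ 2)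
  have h_prod : ∀ y : EuclideanSpace ℝ ι,
      |y i| ^ n * exp (-‖y‖ ^ 2) = ∏ j, F j (y j) := by
    intro y
    rw [Finset.prod_mul_distrib, Finset.prod_ite_eq' Finset.univ i, if_pos (Finset.mem_univ _),
      ← Real.exp_sum, EuclideanSpace.norm_sq_eq, ← Finset.sum_neg_distrib]
    simp only [Real.norm_eq_abs, sq_abs]
  have h_factor : ∀ j, ∫ t, F j t = if j = i then Gamma ((n + 1) / 2) else √π := by
    intro j
    split_ifs with hj
    · simpa [F, hj] using integral_abs_pow_mul_exp_neg_sq n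
    · simpa [F, hj] using integral_gaussian 1
  simp_rw [h_prod]
  rw [← (PiLp.volume_preserving_toLp ι).integral_comp
      (MeasurableEquiv.toLp 2 _).measurableEmbedding,
    volume_pi, integral_fintype_prod_eq_prod (f := F), Finset.prod_congr rfl fun j _ => h_factor j,
    ← Finset.mul_prod_erase Finset.univ _ (Finset.mem_univ i), if_pos rfl,
    Finset.prod_congr rfl fun j hj => if_neg (Finset.ne_of_mem_erase hj), Finset.prod_const,
    Finset.card_erase_of_mem (Finset.mem_univ i), Finset.card_univ]

lemma integral_volumeIoiPow_pow_mul_exp_neg_sq (k n : ℕ) :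
    ∫ r, (r : ℝ) ^ n * exp (-(r : ℝ) ^ 2) ∂(Measure.volumeIoiPow k)
      = Gamma ((n + k + 1) / 2) / 2 := by
  rw [Measure.volumeIoiPow, integral_withDensity_eq_integral_toReal_smul
      (by fun_prop) (ae_of_all _ fun _ => ENNReal.ofReal_lt_top),
    integral_subtype_comap measurableSet_Ioi
      (fun r : ℝ => (ENNReal.ofReal (r ^ k)).toReal • (r ^ n * exp (-r ^ 2))),
    ← Nat.cast_add, ← integral_Ioi_pow_mul_exp_neg_sq]
  refine setIntegral_congr_fun measurableSet_Ioi fun r hr => ?_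
  rw [ENNReal.toReal_ofReal (pow_nonneg (le_of_lt hr) _), smul_eq_mul, pow_add]
  ring

lemma exists_orthonormalBasis_apply_eq {E : Type*} [NormedAddCommGroup E]
    [InnerProductSpace ℝ E] [FiniteDimensional ℝ E] {u : E} (hu : ‖u‖ = 1)
    (i : Fin (Module.finrank ℝ E)) :
    ∃ b : OrthonormalBasis (Fin (Module.finrank ℝ E)) ℝ E, b i = u := by
  have hv : Orthonormal ℝ (({i} : Set _).domRestrict fun _ => u) :=
    ⟨fun _ => hu, fun j k hjk => (hjk (Subsingleton.elim j k)).elim⟩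
  obtain ⟨b, hb⟩ := hv.exists_orthonormalBasis_extension_of_card_eq (by simp)
  exact ⟨b, hb i rfl⟩

section

variable {E : Type*} [NormedAddCommGroup E] [InnerProductSpace ℝ E] [FiniteDimensional ℝ E]
  [MeasurableSpace E] [BorelSpace E] [Nontrivial E]

lemma integral_abs_inner_pow_mul_exp_neg_sq_norm_of_norm_eq_one (n : ℕ) {u : E}
    (hu : ‖u‖ = 1) :
    ∫ x : E, |⟪x, u⟫| ^ n * exp (-‖x‖ ^ 2)
      = Gamma ((n + 1) / 2) * √π ^ (Module.finrank ℝ E - 1) := by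
  obtain ⟨b, hb⟩ := exists_orthonormalBasis_apply_eq hu ⟨0, Module.finrank_pos⟩
  have h_repr : ∀ x : E, |⟪x, u⟫| ^ n * exp (-‖x‖ ^ 2)
      = |b.repr x ⟨0, Module.finrank_pos⟩| ^ n * exp (-‖b.repr x‖ ^ 2) := by
    intro x
    rw [b.repr_apply_apply, hb, real_inner_comm, b.repr.norm_map]
  simp_rw [h_repr]
  rw [b.measurePreserving_repr.integral_comp b.repr.toHomeomorph.measurableEmbedding
      (fun y => |y ⟨0, Module.finrank_pos⟩| ^ n * exp (-‖y‖ ^ 2)),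
    EuclideanSpace.integral_abs_apply_pow_mul_exp_neg_sq_norm, Fintype.card_fin]

lemma integral_abs_inner_pow_mul_exp_neg_sq_norm (n : ℕ) (v : E) :
    ∫ x : E, |⟪x, v⟫| ^ n * exp (-‖x‖ ^ 2)
      = ‖v‖ ^ n * Gamma ((n + 1) / 2) * √π ^ (Module.finrank ℝ E - 1) := by
  obtain ⟨u, hu, hvu⟩ : ∃ u : E, ‖u‖ = 1 ∧ v = ‖v‖ • u := by
    by_cases hv : v = 0
    · obtain ⟨u, hu⟩ := exists_norm_eq E zero_le_one
      exact ⟨u, hu, by simp [hv]⟩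
    · exact ⟨‖v‖⁻¹ • v, norm_smul_inv_norm hv, by
        rw [smul_inv_smul₀ (norm_ne_zero_iff.2 hv)]⟩
  have h_scale : ∀ x : E, |⟪x, v⟫| ^ n * exp (-‖x‖ ^ 2)
      = ‖v‖ ^ n * (|⟪x, u⟫| ^ n * exp (-‖x‖ ^ 2)) := by
    intro x
    conv_lhs => rw [hvu, real_inner_smul_right, abs_mul, abs_norm, mul_pow]
    ring
  simp_rw [h_scale]
  rw [integral_const_mul, integral_abs_inner_pow_mul_exp_neg_sq_norm_of_norm_eq_one n hu,
    mul_assoc]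

lemma integral_abs_inner_pow_mul_exp_neg_sq_norm_eq_toSphere (n : ℕ) (v : E) :
    ∫ x : E, |⟪x, v⟫| ^ n * exp (-‖x‖ ^ 2)
      = (∫ θ : sphere (0 : E) 1, |⟪(θ : E), v⟫| ^ n ∂(volume : Measure E).toSphere)
        * (Gamma ((n + Module.finrank ℝ E) / 2) / 2) := by
  let g : sphere (0 : E) 1 × Ioi (0 : ℝ) → ℝ :=
    fun p => |⟪(p.1 : E), v⟫| ^ n * ((p.2 : ℝ) ^ n * exp (-(p.2 : ℝ) ^ 2))
  have h_polar : ∀ x : ({0}ᶜ : Set E),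
      |⟪(x : E), v⟫| ^ n * exp (-‖(x : E)‖ ^ 2) = g (homeomorphUnitSphereProd E x) := by
    intro x
    have hx : ‖(x : E)‖ ≠ 0 := norm_ne_zero_iff.2 x.2
    simp only [g, homeomorphUnitSphereProd_apply_fst_coe, homeomorphUnitSphereProd_apply_snd_coe,
      real_inner_smul_left, abs_mul, abs_inv, abs_norm, mul_pow]
    rw [mul_mul_mul_comm, ← mul_pow, inv_mul_cancel₀ hx, one_pow, one_mul]
  conv_lhs => rw [← restrict_compl_singleton (μ := volume) 0]
  rw [← integral_subtype_comap (measurableSet_singleton _).compl,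
    integral_congr_ae (ae_of_all _ h_polar),
    (Measure.measurePreserving_homeomorphUnitSphereProd volume).integral_comp
      (Homeomorph.measurableEmbedding _) g,
    integral_prod_mul (fun θ : sphere (0 : E) 1 => |⟪(θ : E), v⟫| ^ n)
      (fun r : Ioi (0 : ℝ) => (r : ℝ) ^ n * exp (-(r : ℝ) ^ 2)),
    integral_volumeIoiPow_pow_mul_exp_neg_sq, Nat.cast_pred Module.finrank_pos, add_assoc,
    sub_add_cancel]

lemma integral_toSphere_abs_inner_pow (n : ℕ) (v : E) :
    ∫ θ : sphere (0 : E) 1, |⟪(θ : E), v⟫| ^ n ∂(volume : Measure E).toSphere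
      = 2 * ‖v‖ ^ n * Gamma ((n + 1) / 2) * √π ^ (Module.finrank ℝ E - 1)
        / Gamma ((n + Module.finrank ℝ E) / 2) := by
  have h := integral_abs_inner_pow_mul_exp_neg_sq_norm_eq_toSphere n v
  rw [integral_abs_inner_pow_mul_exp_neg_sq_norm] at h
  have hΓ : 0 < Gamma ((n + Module.finrank ℝ E) / 2) :=
    Gamma_pos_of_pos (by have := Module.finrank_pos (R := ℝ) (M := E); positivity)
  rw [eq_div_iff hΓ.ne']
  linarith

lemma toSphere_real_univ :
    (volume : Measure E).toSphere.real univ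
      = 2 * √π ^ Module.finrank ℝ E / Gamma (Module.finrank ℝ E / 2) := by
  have h := integral_toSphere_abs_inner_pow 0 (0 : E)
  simp only [pow_zero, integral_const, smul_eq_mul, mul_one, CharP.cast_eq_zero, zero_add,
    Gamma_one_half_eq] at h
  rw [h, mul_assoc 2, ← pow_succ', Nat.sub_add_cancel Module.finrank_pos]

end

lemma isProbabilityMeasure_uniformSphere {d : ℕ} (hd : 0 < d) :
    IsProbabilityMeasure (uniformSphere d) := by
  have : NeZero d := ⟨hd.ne'⟩
  constructor
  rw [uniformSphere, Measure.smul_apply, smul_eq_mul, ENNReal.inv_mul_cancel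
    (Measure.measure_univ_ne_zero.2 (Measure.toSphere_ne_zero _)) (measure_ne_top _ _)]

lemma integral_uniformSphere_abs_inner_pow {d : ℕ} (hd : 0 < d) (n : ℕ)
    (v : EuclideanSpace ℝ (Fin d)) :
    ∫ θ : sphere (0 : EuclideanSpace ℝ (Fin d)) 1,
        |⟪(θ : EuclideanSpace ℝ (Fin d)), v⟫| ^ n ∂(uniformSphere d)
      = ‖v‖ ^ n * Gamma ((n + 1) / 2) * Gamma (d / 2) / (√π * Gamma ((n + d) / 2)) := by
  have : NeZero d := ⟨hd.ne'⟩
  rw [uniformSphere, integral_smul_measure, ENNReal.toReal_inv, ← measureReal_def,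
    toSphere_real_univ, integral_toSphere_abs_inner_pow, finrank_euclideanSpace_fin, smul_eq_mul]
  have hΓ : 0 < Gamma ((n + d) / 2) := Gamma_pos_of_pos (by positivity)
  have hΓd : 0 < Gamma (d / 2) := Gamma_pos_of_pos (by positivity)
  rw [show √π ^ d = √π * √π ^ (d - 1) by rw [← pow_succ', Nat.sub_add_cancel hd]]
  field_simp

lemma summable_of_norm_add_two_le {E : Type*} [NormedAddCommGroup E] [CompleteSpace E]
    {f : ℕ → E} {ρ : ℕ → ℝ} (hρ : Tendsto ρ atTop (𝓝 0))
    (hf : ∀ n, ‖f (n + 2)‖ ≤ ρ n * ‖f n‖) : Summable f := by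
  have h_half : ∀ᶠ n in atTop, ‖f (n + 2)‖ ≤ 2⁻¹ * ‖f n‖ :=
    (hρ.eventually (ge_mem_nhds (by norm_num))).mono fun n hn =>
      (hf n).trans (mul_le_mul_of_nonneg_right hn (norm_nonneg _))
  have h_even : Summable fun k => f (2 * k) :=
    summable_of_ratio_norm_eventually_le (r := 2⁻¹) (by norm_num)
      ((tendsto_id.const_mul_atTop' two_pos).eventually h_half)
  have h_odd : Summable fun k => f (2 * k + 1) :=
    summable_of_ratio_norm_eventually_le (r := 2⁻¹) (by norm_num)
      (((tendsto_add_atTop_nat 1).comp (tendsto_id.const_mul_atTop' two_pos)).eventually h_half)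
  exact h_even.even_add_odd h_odd

noncomputable def slicedLaplaceCoeff (d : ℕ) (α : ℝ) (n : ℕ) : ℝ :=
  (-1 : ℝ) ^ n * α ^ n * Real.sqrt Real.pi * Real.Gamma (((n : ℝ) + d) / 2) /
    ((n.factorial : ℝ) * Real.Gamma ((d : ℝ) / 2) * Real.Gamma (((n : ℝ) + 1) / 2))

lemma slicedLaplaceCoeff_add_two {d : ℕ} (hd : 0 < d) (α : ℝ) (n : ℕ) :
    slicedLaplaceCoeff d α (n + 2)
      = slicedLaplaceCoeff d α n * (α ^ 2 * (n + d) / ((n + 1) ^ 2 * (n + 2))) := by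
  have hΓ₁ : Gamma ((n + 1) / 2) ≠ 0 := (Gamma_pos_of_pos (by positivity)).ne'
  have hΓd : Gamma (d / 2) ≠ 0 := (Gamma_pos_of_pos (by positivity)).ne'
  have h_arg₁ : ((n + 2 : ℕ) + 1 : ℝ) / 2 = (n + 1) / 2 + 1 := by push_cast; ring
  have h_argd : ((n + 2 : ℕ) + d : ℝ) / 2 = (n + d) / 2 + 1 := by push_cast; ring
  rw [slicedLaplaceCoeff, slicedLaplaceCoeff, h_arg₁, h_argd, Gamma_add_one (by positivity),
    Gamma_add_one (by positivity), Nat.factorial_succ, Nat.factorial_succ]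
  push_cast
  field_simp
  ring

-- The Gamma factors shift by `1/2` with `n`, so only `n ↦ n + 2` gives a closed-form ratio.
lemma summable_slicedLaplaceCoeff_mul_pow {d : ℕ} (hd : 0 < d) (α x : ℝ) :
    Summable fun n => slicedLaplaceCoeff d α n * x ^ n := by
  refine summable_of_norm_add_two_le (ρ := fun n => α ^ 2 * x ^ 2 * d / (n + 1)) ?_ fun n => ?_
  · simpa [Function.comp_def] using
      (tendsto_const_div_atTop_nhds_zero_nat (α ^ 2 * x ^ 2 * d)).comp (tendsto_add_atTop_nat 1)
  · have h_ratio : (n + d : ℝ) / ((n + 1) ^ 2 * (n + 2)) ≤ d / (n + 1) := by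
      have hd₁ : (1 : ℝ) ≤ d := by exact_mod_cast hd
      have hn : (0 : ℝ) ≤ n := n.cast_nonneg
      rw [div_le_div_iff₀ (by positivity) (by positivity)]
      nlinarith [mul_nonneg hn (sub_nonneg.2 hd₁), mul_nonneg (mul_nonneg hn hn) hn]
    have hx2 : ‖x‖ ^ 2 = x ^ 2 := by rw [Real.norm_eq_abs, sq_abs]
    rw [slicedLaplaceCoeff_add_two hd, norm_mul, norm_mul,
      Real.norm_of_nonneg (by positivity :
        (0 : ℝ) ≤ α ^ 2 * (n + d) / ((n + 1) ^ 2 * (n + 2))),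
      norm_mul, norm_pow, norm_pow, pow_add, hx2]
    calc _ = α ^ 2 * x ^ 2 * ((n + d : ℝ) / ((n + 1) ^ 2 * (n + 2)))
          * (‖slicedLaplaceCoeff d α n‖ * ‖x‖ ^ n) := by ring
      _ ≤ α ^ 2 * x ^ 2 * (d / (n + 1)) * (‖slicedLaplaceCoeff d α n‖ * ‖x‖ ^ n) := by
          gcongr
      _ = _ := by ring

lemma integral_slicedLaplaceCoeff_mul_abs_inner_pow {d : ℕ} (hd : 0 < d) (α : ℝ) (n : ℕ)
    (v : EuclideanSpace ℝ (Fin d)) :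
    ∫ θ : sphere (0 : EuclideanSpace ℝ (Fin d)) 1,
        slicedLaplaceCoeff d α n * |⟪(θ : EuclideanSpace ℝ (Fin d)), v⟫| ^ n
          ∂(uniformSphere d)
      = (-α * ‖v‖) ^ n / n.factorial := by
  have hΓ₁ : 0 < Gamma ((n + 1) / 2) := Gamma_pos_of_pos (by positivity)
  have hΓ : 0 < Gamma ((n + d) / 2) := Gamma_pos_of_pos (by positivity)
  have hΓd : 0 < Gamma (d / 2) := Gamma_pos_of_pos (by positivity)
  rw [integral_const_mul, integral_uniformSphere_abs_inner_pow hd, slicedLaplaceCoeff, mul_pow,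
    neg_pow α]
  field_simp

lemma integral_norm_slicedLaplaceCoeff_mul_abs_inner_pow {d : ℕ} (hd : 0 < d) (α : ℝ) (n : ℕ)
    (v : EuclideanSpace ℝ (Fin d)) :
    ∫ θ : sphere (0 : EuclideanSpace ℝ (Fin d)) 1,
        ‖slicedLaplaceCoeff d α n * |⟪(θ : EuclideanSpace ℝ (Fin d)), v⟫| ^ n‖
          ∂(uniformSphere d)
      = ‖(-α * ‖v‖) ^ n / n.factorial‖ := by
  simp only [norm_mul, norm_pow, Real.norm_eq_abs, abs_abs]
  rw [integral_const_mul, ← abs_of_nonneg (integral_nonneg fun θ => by positivity), ← abs_mul,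
    ← integral_const_mul, integral_slicedLaplaceCoeff_mul_abs_inner_pow hd]

theorem laplacian_kernel_sliced_general (d : ℕ) (hd : 2 ≤ d) (α : ℝ)
    (f : ℝ → ℝ)
    (hf : ∀ x : ℝ, f x = ∑' n : ℕ,
      ((-1 : ℝ) ^ n * α ^ n * Real.sqrt Real.pi * Real.Gamma (((n : ℝ) + d) / 2) /
          ((n.factorial : ℝ) * Real.Gamma ((d : ℝ) / 2) *
            Real.Gamma (((n : ℝ) + 1) / 2))) * x ^ n) :
    (∀ x : ℝ, 0 ≤ x → Summable (fun n : ℕ =>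
      ((-1 : ℝ) ^ n * α ^ n * Real.sqrt Real.pi * Real.Gamma (((n : ℝ) + d) / 2) /
          ((n.factorial : ℝ) * Real.Gamma ((d : ℝ) / 2) *
            Real.Gamma (((n : ℝ) + 1) / 2))) * x ^ n)) ∧
    ∀ x y : EuclideanSpace ℝ (Fin d),
      (∫ ξ : sphere (0 : EuclideanSpace ℝ (Fin d)) 1,
          f |⟪(ξ : EuclideanSpace ℝ (Fin d)), x - y⟫| ∂(uniformSphere d))
        = Real.exp (-α * ‖x - y‖) := by
  have hd₀ : 0 < d := by omega
  have := isProbabilityMeasure_uniformSphere hd₀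
  refine ⟨fun x _ => summable_slicedLaplaceCoeff_mul_pow hd₀ α x, fun x y => ?_⟩
  have h_int : ∀ n, Integrable (fun θ : sphere (0 : EuclideanSpace ℝ (Fin d)) 1 =>
      slicedLaplaceCoeff d α n * |⟪(θ : EuclideanSpace ℝ (Fin d)), x - y⟫| ^ n)
      (uniformSphere d) :=
    fun n => Continuous.integrable_of_hasCompactSupport (by fun_prop)
      (HasCompactSupport.of_compactSpace _)
  have h_norm := (Real.summable_pow_div_factorial (-α * ‖x - y‖)).norm
  simp_rw [← integral_norm_slicedLaplaceCoeff_mul_abs_inner_pow hd₀ α _ (x - y)] at h_norm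
  calc _ = ∫ ξ : sphere (0 : EuclideanSpace ℝ (Fin d)) 1, ∑' n, slicedLaplaceCoeff d α n
          * |⟪(ξ : EuclideanSpace ℝ (Fin d)), x - y⟫| ^ n ∂(uniformSphere d) := by
        simp_rw [hf]; rfl
    _ = ∑' n, (-α * ‖x - y‖) ^ n / n.factorial := by
        rw [← integral_tsum_of_summable_integral_norm h_int h_norm]
        simp_rw [integral_slicedLaplaceCoeff_mul_abs_inner_pow hd₀]
    _ = _ := by rw [Real.exp_eq_exp_ℝ, NormedSpace.exp_eq_tsum_div]

/-- The `d`-dimensional Laplacian kernel `exp(-α‖x-y‖)` is the sliced version of the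
one-dimensional kernel with basis function
`f(x) = ∑ₙ ((-1)ⁿ αⁿ √π Γ((n+d)/2)/(n! Γ(d/2) Γ((n+1)/2))) xⁿ`; moreover this power
series converges for every `x ≥ 0`. -/
theorem laplacian_kernel_sliced (d : ℕ) (hd : 2 ≤ d) (α : ℝ) (hα : 0 < α)
    (f : ℝ → ℝ)
    (hf : ∀ x : ℝ, f x = ∑' n : ℕ,
      ((-1 : ℝ) ^ n * α ^ n * Real.sqrt Real.pi * Real.Gamma (((n : ℝ) + d) / 2) /
          ((n.factorial : ℝ) * Real.Gamma ((d : ℝ) / 2) *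
            Real.Gamma (((n : ℝ) + 1) / 2))) * x ^ n) :
    (∀ x : ℝ, 0 ≤ x → Summable (fun n : ℕ =>
      ((-1 : ℝ) ^ n * α ^ n * Real.sqrt Real.pi * Real.Gamma (((n : ℝ) + d) / 2) /
          ((n.factorial : ℝ) * Real.Gamma ((d : ℝ) / 2) *
            Real.Gamma (((n : ℝ) + 1) / 2))) * x ^ n)) ∧
    ∀ x y : EuclideanSpace ℝ (Fin d),
      (∫ ξ : sphere (0 : EuclideanSpace ℝ (Fin d)) 1,
          f |⟪(ξ : EuclideanSpace ℝ (Fin d)), x - y⟫| ∂(uniformSphere d))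
        = Real.exp (-α * ‖x - y‖) :=
  laplacian_kernel_sliced_general d hd α f hf
end
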